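/- arXiv:2111.02547 — 4 statements merged into one kernel-verified Lean document; each statement's English description precedes it below -/
import Mathlib

section
/- Let f, g ∈ Cu(G) and let A = (A_n) be a van Hove sequence. If the Eberlein convolution f ⊛_A g exists, then the Eberlein convolution g ⊛_{−A} f exists and g ⊛_{−A} f = f ⊛_A g (as functions on G). -/
open MeasureTheory Filter Topology Pointwise ComplexConjugate
open scoped BigOperators

noncomputable section

variable {G : Type*} [AddCommGroup G] [UniformSpace G] [IsUniformAddGroup G]
  [LocallyCompactSpace G] [SecondCountableTopology G]
  [MeasurableSpace G] [BorelSpace G]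

/-- The van Hove `K`-boundary of a set `B`:
`∂^K B = (closure (B+K) \ B) ∪ (((G \ B) - K) ∩ closure B)`. -/
def vhBoundary (K B : Set G) : Set G :=
  (closure (B + K) \ B) ∪ ((Bᶜ - K) ∩ closure B)

/-- `A` is a van Hove sequence for the Haar measure `μ`: a sequence of compact sets of
positive measure such that for every compact `K` the relative measure of the van Hove
boundary tends to `0`. -/
def IsVanHove (μ : Measure G) (A : ℕ → Set G) : Prop :=
  (∀ n, IsCompact (A n)) ∧ (∀ n, 0 < μ (A n)) ∧
    ∀ K : Set G, IsCompact K →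
      Tendsto (fun n => μ (vhBoundary K (A n)) / μ (A n)) atTop (nhds 0)

/-- `f ∈ Cu(G)`: bounded and uniformly continuous. -/
def IsCu (f : G → ℂ) : Prop :=
  UniformContinuous f ∧ ∃ C : ℝ, ∀ x, ‖f x‖ ≤ C

/-- `χ` is a (continuous, unimodular) character of `G`, viewed as a `ℂ`-valued function. -/
def IsChar (χ : G → ℂ) : Prop :=
  Continuous χ ∧ (∀ x, ‖χ x‖ = 1) ∧ ∀ x y, χ (x + y) = χ x * χ y

/-- `f̃(x) = conj (f (-x))`. -/
def tilde (f : G → ℂ) : G → ℂ := fun x => conj (f (-x))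

/-- `(T_t f)(x) = f (x - t)`. -/
def shiftBy (t : G) (f : G → ℂ) : G → ℂ := fun x => f (x - t)

/-- Sup norm `‖f‖_∞`. -/
def supN (f : G → ℂ) : ℝ := ⨆ x, ‖f x‖

/-- The Fourier–Bohr coefficient `c_χ^A(f)` exists and equals `c`. -/
def FBTendsto (μ : Measure G) (A : ℕ → Set G) (χ f : G → ℂ) (c : ℂ) : Prop :=
  Tendsto (fun n => (μ (A n)).toReal⁻¹ • ∫ t in A n, conj (χ t) * f t ∂μ)
    atTop (nhds c)

/-- The Fourier–Bohr coefficient of `f` at `χ` exists uniformly (w.r.t. `A`) with value `c`: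
`lim_n |A_n|⁻¹ ∫_{x+A_n} conj (χ t) f t dθ(t) = c` uniformly in `x ∈ G`. -/
def FBUniform (μ : Measure G) (A : ℕ → Set G) (χ f : G → ℂ) (c : ℂ) : Prop :=
  TendstoUniformly
    (fun n (x : G) => (μ (A n)).toReal⁻¹ • ∫ t in x +ᵥ A n, conj (χ t) * f t ∂μ)
    (fun _ => c) atTop

/-- The Eberlein convolution `f ⊛_A g` exists and equals `F`:
for every `t`, `lim_n |A_n|⁻¹ ∫_{A_n} f s · g (t - s) dθ(s) = F t`. -/
def EberleinTendsto (μ : Measure G) (A : ℕ → Set G) (f g F : G → ℂ) : Prop :=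
  ∀ t : G, Tendsto (fun n => (μ (A n)).toReal⁻¹ • ∫ s in A n, f s * g (t - s) ∂μ)
    atTop (nhds (F t))

/-- The Besicovitch seminorm `‖f‖_{b,p,A}`. -/
def bNorm (μ : Measure G) (A : ℕ → Set G) (p : ℝ) (f : G → ℂ) : ℝ :=
  Filter.limsup
    (fun n => ((μ (A n)).toReal⁻¹ * ∫ t in A n, ‖f t‖ ^ p ∂μ) ^ (1 / p)) atTop

/-- `P` is a trigonometric polynomial: a finite linear combination of characters. -/
def IsTrigPoly (P : G → ℂ) : Prop :=
  ∃ (k : ℕ) (c : Fin k → ℂ) (χ : Fin k → G → ℂ),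
    (∀ j, IsChar (χ j)) ∧ P = fun x => ∑ j, c j * χ j x

/-- `f ∈ Bap^p_A(G)`: `f` can be approximated by trigonometric polynomials in `‖·‖_{b,p,A}`. -/
def BapP (μ : Measure G) (A : ℕ → Set G) (p : ℝ) (f : G → ℂ) : Prop :=
  ∀ ε : ℝ, 0 < ε → ∃ P : G → ℂ, IsTrigPoly P ∧ bNorm μ A p (fun x => f x - P x) < ε

/-- `f` is amenable w.r.t. `A` with mean `c`:
`lim_n |A_n|⁻¹ ∫_{x+A_n} f dθ = c` uniformly in `x ∈ G`. -/
def Amenable (μ : Measure G) (A : ℕ → Set G) (f : G → ℂ) (c : ℂ) : Prop :=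
  TendstoUniformly
    (fun n (x : G) => (μ (A n)).toReal⁻¹ • ∫ t in x +ᵥ A n, f t ∂μ)
    (fun _ => c) atTop


/-!
Substituting `s ↦ t - s` turns the average of `g s * f (t - s)` over `-A n` into the average
of `w v = f v * g (t - v)` over the translate `t + A n`, while `f ⊛_A g` at `t` is the average
of the same `w` over `A n`. Up to closures, `t + A n` and `A n` differ only inside the van Hove
boundary `∂^{t, -t} A n`, and `w` is bounded, so the two averages are asymptotically equal.
-/

open scoped symmDiff ENNReal

section General

variable {H E : Type*} [NormedAddCommGroup E] [NormedSpace ℝ E]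

theorem setIntegral_neg_sub_left_eq_setIntegral_vadd [AddGroup H] [MeasurableSpace H]
    [MeasurableAdd H] [MeasurableNeg H] (μ : Measure H) [μ.IsAddLeftInvariant]
    [μ.IsNegInvariant] (φ : H → E) (S : Set H) (t : H) :
    ∫ s in -S, φ (t - s) ∂μ = ∫ v in t +ᵥ S, φ v ∂μ := by
  have hpre : (t - ·) ⁻¹' (t +ᵥ S) = -S := by
    ext x
    simp [Set.mem_vadd_set_iff_neg_vadd_mem, vadd_eq_add, sub_eq_add_neg]
  rw [← hpre]
  exact (Measure.measurePreserving_sub_left μ t).setIntegral_preimage_emb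
    (MeasurableEquiv.subLeft t).measurableEmbedding φ _

theorem norm_setIntegral_sub_setIntegral_le [MeasurableSpace H] {μ : Measure H} {w : H → E}
    {S T : Set H} {C : ℝ} (hS : MeasurableSet S) (hT : MeasurableSet T)
    (hwS : IntegrableOn w S μ) (hwT : IntegrableOn w T μ) (hST : μ (S ∆ T) ≠ ∞)
    (hC : ∀ x ∈ S ∆ T, ‖w x‖ ≤ C) :
    ‖∫ x in S, w x ∂μ - ∫ x in T, w x ∂μ‖ ≤ C * μ.real (S ∆ T) := by
  have hsplit : ∫ x in S, w x ∂μ - ∫ x in T, w x ∂μ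
      = ∫ x in S \ T, w x ∂μ - ∫ x in T \ S, w x ∂μ := by
    rw [← integral_inter_add_sdiff hT hwS, ← integral_inter_add_sdiff hS hwT, Set.inter_comm]
    abel
  have hST₁ : μ (S \ T) < ∞ :=
    (measure_mono fun x hx => Set.mem_symmDiff.2 (Or.inl hx)).trans_lt hST.lt_top
  have hST₂ : μ (T \ S) < ∞ :=
    (measure_mono fun x hx => Set.mem_symmDiff.2 (Or.inr hx)).trans_lt hST.lt_top
  calc ‖∫ x in S, w x ∂μ - ∫ x in T, w x ∂μ‖
      ≤ ‖∫ x in S \ T, w x ∂μ‖ + ‖∫ x in T \ S, w x ∂μ‖ := hsplit ▸ norm_sub_le _ _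
    _ ≤ C * μ.real (S \ T) + C * μ.real (T \ S) := add_le_add
        (norm_setIntegral_le_of_norm_le_const hST₁ fun x hx => hC x (Or.inl hx))
        (norm_setIntegral_le_of_norm_le_const hST₂ fun x hx => hC x (Or.inr hx))
    _ = C * μ.real (S ∆ T) := by
        simp only [measureReal_def]
        rw [measure_symmDiff_eq hS.nullMeasurableSet hT.nullMeasurableSet,
          ENNReal.toReal_add hST₁.ne hST₂.ne, mul_add]

theorem IsCompact.restrict_closure [TopologicalSpace H] [R1Space H] [MeasurableSpace H]
    [BorelSpace H] {μ : Measure H} {K : Set H} (hK : IsCompact K) (hμK : μ K ≠ ∞) :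
    μ.restrict (closure K) = μ.restrict K := by
  refine le_antisymm ?_ (Measure.restrict_mono subset_closure le_rfl)
  calc μ.restrict (closure K) ≤ μ.restrict (toMeasurable μ K) :=
        Measure.restrict_mono (hK.closure_subset_measurableSet
          (measurableSet_toMeasurable μ K) (subset_toMeasurable μ K)) le_rfl
    _ = μ.restrict K := Measure.restrict_toMeasurable hμK

end General

section VanHove

variable {H : Type*} [AddCommGroup H] [UniformSpace H]

theorem symmDiff_vadd_closure_subset_vhBoundary [ContinuousAdd H] {K B : Set H} {t : H}
    (ht : t ∈ K) (hnt : -t ∈ K) :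
    (t +ᵥ closure B) ∆ closure B ⊆ vhBoundary K B := by
  rintro x (⟨⟨b, hb, rfl⟩, hxB⟩ | ⟨hxB, hxt⟩)
  · refine Or.inl ⟨?_, fun hx => hxB (subset_closure hx)⟩
    have : b + t ∈ closure (B + K) :=
      map_mem_closure₂ continuous_add hb (subset_closure ht)
        fun a ha k hk => Set.add_mem_add ha hk
    simpa [vadd_eq_add, add_comm] using this
  · refine Or.inr ⟨⟨x - t, fun hx => hxt ⟨x - t, subset_closure hx, ?_⟩, -t, hnt, ?_⟩, hxB⟩
    · simp [vadd_eq_add]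
    · simp

variable [IsUniformAddGroup H] [MeasurableSpace H] {μ : Measure H} [IsFiniteMeasureOnCompacts μ]

theorem measure_vhBoundary_lt_top {K B : Set H} (hK : IsCompact K) (hB : IsCompact B) :
    μ (vhBoundary K B) < ∞ :=
  calc μ (vhBoundary K B) ≤ μ (closure (B + K) ∪ closure B) :=
        measure_mono (Set.union_subset_union Set.sdiff_subset Set.inter_subset_right)
    _ < ∞ := ((hB.add hK).closure.union hB.closure).measure_lt_top

theorem IsVanHove.tendsto_smul_setIntegral_vadd_sub [BorelSpace H] {A : ℕ → Set H}
    (hA : IsVanHove μ A) {E : Type*} [NormedAddCommGroup E] [NormedSpace ℝ E] {w : H → E}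
    {C : ℝ} (hw : AEStronglyMeasurable w μ) (hwC : ∀ x, ‖w x‖ ≤ C) (t : H) :
    Tendsto (fun n => (μ (A n)).toReal⁻¹ • (∫ v in t +ᵥ A n, w v ∂μ - ∫ v in A n, w v ∂μ))
      atTop (𝓝 0) := by
  obtain ⟨hAc, -, hAvh⟩ := hA
  set K : Set H := {t, -t}
  have hK : IsCompact K := (Set.toFinite K).isCompact
  have hC : 0 ≤ C := (norm_nonneg _).trans (hwC 0)
  -- Without `T2Space H` a compact set need not be measurable; its closure is, and carries the
  -- same restricted measure.
  have hclosure : ∀ {S : Set H}, IsCompact S → μ.restrict S = μ.restrict (closure S) :=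
    fun hS => (hS.restrict_closure hS.measure_lt_top.ne).symm
  have hint : ∀ {S : Set H}, IsCompact S → IntegrableOn w (closure S) μ := fun hS =>
    Measure.integrableOn_of_bounded hS.closure.measure_lt_top.ne hw (ae_of_all _ hwC)
  have hbound : ∀ n, ‖(μ (A n)).toReal⁻¹ • (∫ v in t +ᵥ A n, w v ∂μ - ∫ v in A n, w v ∂μ)‖
      ≤ C * (μ (vhBoundary K (A n)) / μ (A n)).toReal := by
    intro n
    have hsub : closure (t +ᵥ A n) ∆ closure (A n) ⊆ vhBoundary K (A n) := by
      rw [closure_vadd]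
      exact symmDiff_vadd_closure_subset_vhBoundary (by simp [K]) (by simp [K])
    have hfin := measure_vhBoundary_lt_top (μ := μ) hK (hAc n)
    have hdiff := norm_setIntegral_sub_setIntegral_le isClosed_closure.measurableSet
      isClosed_closure.measurableSet (hint ((hAc n).vadd t)) (hint (hAc n))
      (measure_ne_top_of_subset hsub hfin.ne) (fun x _ => hwC x)
    calc ‖(μ (A n)).toReal⁻¹ • (∫ v in t +ᵥ A n, w v ∂μ - ∫ v in A n, w v ∂μ)‖
        = (μ (A n)).toReal⁻¹ *
            ‖∫ v in closure (t +ᵥ A n), w v ∂μ - ∫ v in closure (A n), w v ∂μ‖ := by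
          rw [hclosure ((hAc n).vadd t), hclosure (hAc n), norm_smul, norm_inv,
            Real.norm_eq_abs, abs_of_nonneg ENNReal.toReal_nonneg]
      _ ≤ (μ (A n)).toReal⁻¹ * (C * μ.real (vhBoundary K (A n))) := by
          gcongr
          exact hdiff.trans (mul_le_mul_of_nonneg_left (measureReal_mono hsub hfin.ne) hC)
      _ = C * (μ (vhBoundary K (A n)) / μ (A n)).toReal := by
          rw [ENNReal.toReal_div, measureReal_def]
          ring
  have hratio := ((ENNReal.tendsto_toReal ENNReal.zero_ne_top).comp (hAvh K hK)).const_mul C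
  rw [ENNReal.toReal_zero, mul_zero] at hratio
  exact squeeze_zero_norm hbound hratio

end VanHove

/-- if `f ⊛_A g` exists then `g ⊛_{-A} f` exists and equals it. -/
theorem stmt1 (μ : Measure G) [μ.IsAddHaarMeasure] (A : ℕ → Set G)
    (hA : IsVanHove μ A) (f g : G → ℂ) (hf : IsCu f) (hg : IsCu g) (F : G → ℂ)
    (h : EberleinTendsto μ A f g F) :
    EberleinTendsto μ (fun n => -(A n)) g f F := by
  intro t
  obtain ⟨hfu, Cf, hCf⟩ := hf
  obtain ⟨hgu, Cg, hCg⟩ := hg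
  set w : G → ℂ := fun v => f v * g (t - v)
  have hw : AEStronglyMeasurable w μ :=
    (hfu.continuous.mul (hgu.continuous.comp (continuous_sub_left t))).aestronglyMeasurable
  have hwC : ∀ v, ‖w v‖ ≤ Cf * Cg := fun v => (norm_mul_le _ _).trans
    (mul_le_mul (hCf v) (hCg _) (norm_nonneg _) ((norm_nonneg _).trans (hCf v)))
  have hreflect : ∀ n, (μ (-A n)).toReal⁻¹ • ∫ s in -A n, g s * f (t - s) ∂μ
      = (μ (A n)).toReal⁻¹ • ∫ v in A n, w v ∂μ
        + (μ (A n)).toReal⁻¹ • (∫ v in t +ᵥ A n, w v ∂μ - ∫ v in A n, w v ∂μ) := by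
    intro n
    have hw_sub : ∀ s, g s * f (t - s) = w (t - s) := fun s => by
      simp only [w, sub_sub_cancel, mul_comm]
    simp_rw [hw_sub, setIntegral_neg_sub_left_eq_setIntegral_vadd, Measure.measure_neg,
      ← smul_add, add_sub_cancel]
  have hsum := (h t).add (hA.tendsto_smul_setIntegral_vadd_sub hw hwC t)
  rw [add_zero] at hsum
  exact hsum.congr fun n => (hreflect n).symm
end
end

section
/- Let f, g ∈ Cu(G), let χ be a character of G and let A = (A_n) be a van Hove sequence such that: (a) the Eberlein convolution f ⊛_A g exists; (b) the Fourier–Bohr coefficient c_χ^A(f) exists; (c) the Fourier–Bohr coefficient c_χ(g) exists uniformly with respect to A. Then the Fourier–Bohr coefficient c_χ(f ⊛_A g) exists uniformly with respect to A and c_χ(f ⊛_A g) = c_χ^A(f) · c_χ(g). -/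
/-!
Twisting by the character turns Fourier–Bohr coefficients into means: with `f' = conj χ · f`
and `g' = conj χ · g` one has `conj χ(t) f(s) g(t - s) = f'(s) g'(t - s)`. Averages over `S`
are written as integrals against the normalised restriction `μ[|S]`. For fixed `n` and `x`,
dominated convergence in `m` and Fubini give
`|A_n|⁻¹ ∫_{x+A_n} conj χ · (f ⊛ g) = lim_m |A_m|⁻¹ ∫_{A_m} f'(s) I(s) ds`, where `I(s)` is the
mean of `g'` over `(x - s) + A_n`. If `I` is everywhere within `δ` of `c_χ(g)`, the right-hand
side is within `‖f‖_∞ δ` of `c_χ^A(f) c_χ(g)`, and uniformity of `c_χ(g)` makes `δ → 0`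
independently of `x`.
-/

open MeasureTheory Filter Topology Pointwise ComplexConjugate
open scoped BigOperators

noncomputable section

variable {G : Type*} [AddCommGroup G] [UniformSpace G] [IsUniformAddGroup G]
  [LocallyCompactSpace G] [SecondCountableTopology G]
  [MeasurableSpace G] [BorelSpace G]

open ProbabilityTheory

section Averages

variable {G E : Type*} [MeasurableSpace G] [NormedAddCommGroup E] [NormedSpace ℝ E]

theorem integral_cond_eq (μ : Measure G) (S : Set G) (h : G → E) :
    ∫ t, h t ∂μ[|S] = (μ S).toReal⁻¹ • ∫ t in S, h t ∂μ := by
  rw [ProbabilityTheory.cond, integral_smul_measure, ENNReal.toReal_inv]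

variable [AddGroup G] (μ : Measure G) [μ.IsAddLeftInvariant] (x : G) (T : Set G) (h : G → E)

theorem inv_smul_setIntegral_vadd_eq_integral_cond :
    (μ T).toReal⁻¹ • ∫ t in x +ᵥ T, h t ∂μ = ∫ t, h t ∂μ[|x +ᵥ T] := by
  rw [integral_cond_eq, measure_vadd]

theorem integral_cond_vadd [MeasurableAdd G] :
    ∫ t, h t ∂μ[|x +ᵥ T] = ∫ t, h (x + t) ∂μ[|T] := by
  rw [← inv_smul_setIntegral_vadd_eq_integral_cond, integral_cond_eq,
    ← (measurePreserving_add_left μ x).setIntegral_preimage_emb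
      (MeasurableEquiv.addLeft x).measurableEmbedding h (x +ᵥ T)]
  congr 3
  ext t
  simp [Set.mem_vadd_set_iff_neg_vadd_mem]

end Averages

theorem continuous_integral_of_norm_le {X Y E : Type*} [TopologicalSpace X]
    [FirstCountableTopology X] [TopologicalSpace Y]
    [MeasurableSpace Y] [OpensMeasurableSpace Y] [NormedAddCommGroup E] [NormedSpace ℝ E]
    [SecondCountableTopologyEither Y E] (P : Measure Y) [IsFiniteMeasure P] {k : X → Y → E}
    (hk : Continuous k.uncurry) {C : ℝ} (hC : ∀ x y, ‖k x y‖ ≤ C) :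
    Continuous fun x => ∫ y, k x y ∂P :=
  continuous_of_dominated
    (fun x => (hk.comp (Continuous.prodMk_right x)).aestronglyMeasurable)
    (fun x => Eventually.of_forall (hC x)) (integrable_const C)
    (Eventually.of_forall fun y => hk.comp (Continuous.prodMk_left y))

theorem TendstoUniformly.of_norm_sub_le_mul {ι α E F : Type*} [SeminormedAddCommGroup E]
    [SeminormedAddCommGroup F] {l : Filter ι} {u : ι → α → E} {v : ι → α → F} {b : E} {c : F}
    {C : ℝ} (hu : TendstoUniformly u (fun _ => b) l)
    (h : ∀ n δ, (∀ y, ‖u n y - b‖ ≤ δ) → ∀ x, ‖v n x - c‖ ≤ C * δ) :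
    TendstoUniformly v (fun _ => c) l := by
  rw [Metric.tendstoUniformly_iff] at hu ⊢
  intro ε hε
  have hC : 0 < |C| + 1 := by positivity
  filter_upwards [hu (ε / (|C| + 1)) (div_pos hε hC)] with n hn x
  rw [dist_comm, dist_eq_norm]
  calc ‖v n x - c‖ ≤ C * (ε / (|C| + 1)) :=
        h n _ (fun y => by rw [← dist_eq_norm, dist_comm]; exact (hn y).le) x
    _ ≤ |C| * (ε / (|C| + 1)) := by gcongr; exact le_abs_self C
    _ < (|C| + 1) * (ε / (|C| + 1)) := by gcongr; linarith
    _ = ε := mul_div_cancel₀ ε hC.ne'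

theorem norm_integral_mul_sub_integral_mul_le {α : Type*} [MeasurableSpace α]
    (P : Measure α) [IsProbabilityMeasure P] {u w : α → ℂ} {b : ℂ} {C δ : ℝ}
    (hu : AEStronglyMeasurable u P) (hw : AEStronglyMeasurable w P)
    (hC : ∀ s, ‖u s‖ ≤ C) (hδ : ∀ s, ‖w s - b‖ ≤ δ) :
    ‖∫ s, u s * w s ∂P - (∫ s, u s ∂P) * b‖ ≤ C * δ := by
  have hu_int : Integrable u P := .of_bound hu C (.of_forall hC)
  have huw_int : Integrable (fun s => u s * w s) P :=
    hu_int.mul_bdd hw (.of_forall fun s => (norm_le_norm_add_norm_sub' (w s) b).trans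
      (add_le_add_right (hδ s) _))
  calc ‖∫ s, u s * w s ∂P - (∫ s, u s ∂P) * b‖ = ‖∫ s, u s * (w s - b) ∂P‖ := by
        simp_rw [mul_sub]
        rw [integral_sub huw_int (hu_int.mul_const b), integral_mul_const]
    _ ≤ C * δ * P.real Set.univ := norm_integral_le_of_norm_le_const <| .of_forall fun s => by
        rw [norm_mul]; exact mul_le_mul (hC s) (hδ s) (norm_nonneg _) ((norm_nonneg _).trans (hC s))
    _ = C * δ := by simp

section Convolution

variable {G : Type*} [AddGroup G] [TopologicalSpace G] [IsTopologicalAddGroup G]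
  [SecondCountableTopology G] [MeasurableSpace G] [BorelSpace G]
  {u v : G → ℂ} {Cu Cv : ℝ}

theorem integral_integral_mul_sub_comm (P Q : Measure G) [IsFiniteMeasure P] [IsFiniteMeasure Q]
    (hu : Continuous u) (hv : Continuous v) (hCu : ∀ s, ‖u s‖ ≤ Cu) (hCv : ∀ s, ‖v s‖ ≤ Cv) :
    ∫ t, ∫ s, u s * v (t - s) ∂P ∂Q = ∫ s, u s * ∫ t, v (t - s) ∂Q ∂P := by
  have hint : Integrable (Function.uncurry fun t s => u s * v (t - s)) (Q.prod P) :=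
    Integrable.of_bound (by fun_prop : Continuous _).aestronglyMeasurable (Cu * Cv)
      (Eventually.of_forall fun p => by
        rw [Function.uncurry_apply_pair, norm_mul]
        exact mul_le_mul (hCu _) (hCv _) (norm_nonneg _) ((norm_nonneg _).trans (hCu p.2)))
  rw [integral_integral_swap hint]
  simp only [integral_const_mul]

theorem norm_integral_sub_mul_le_of_tendsto {P : ℕ → Measure G} [∀ m, IsProbabilityMeasure (P m)]
    {Q : Measure G} [IsFiniteMeasure Q] {Φ : G → ℂ} {a b : ℂ} {δ : ℝ}
    (hu : Continuous u) (hv : Continuous v) (hCu : ∀ s, ‖u s‖ ≤ Cu) (hCv : ∀ s, ‖v s‖ ≤ Cv)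
    (hΦ : ∀ t, Tendsto (fun m => ∫ s, u s * v (t - s) ∂P m) atTop (𝓝 (Φ t)))
    (ha : Tendsto (fun m => ∫ s, u s ∂P m) atTop (𝓝 a))
    (hδ : ∀ s, ‖∫ t, v (t - s) ∂Q - b‖ ≤ δ) :
    ‖∫ t, Φ t ∂Q - a * b‖ ≤ Cu * δ := by
  have hCu0 : 0 ≤ Cu := (norm_nonneg _).trans (hCu 0)
  have hCuv : ∀ s t, ‖u s * v (t - s)‖ ≤ Cu * Cv := fun s t => by
    rw [norm_mul]; exact mul_le_mul (hCu s) (hCv _) (norm_nonneg _) hCu0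
  set I : G → ℂ := fun s => ∫ t, v (t - s) ∂Q
  have hI : Continuous I :=
    continuous_integral_of_norm_le Q (k := fun s t => v (t - s)) (by fun_prop) fun _ _ => hCv _
  have hlim : Tendsto (fun m => ∫ s, u s * I s ∂P m) atTop (𝓝 (∫ t, Φ t ∂Q)) := by
    have hdom := tendsto_integral_of_dominated_convergence (μ := Q) (fun _ => Cu * Cv)
      (fun m => (continuous_integral_of_norm_le (P m) (k := fun t s => u s * v (t - s))
        (by fun_prop) fun t s => hCuv s t).aestronglyMeasurable)
      (integrable_const _)
      (fun m => Eventually.of_forall fun t => norm_integral_le_of_norm_le_const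
        (Eventually.of_forall fun s => hCuv s t) |>.trans_eq (by simp))
      (Eventually.of_forall hΦ)
    simpa only [integral_integral_mul_sub_comm _ _ hu hv hCu hCv] using hdom
  have hbound : ∀ m, ‖∫ s, u s * I s ∂P m - (∫ s, u s ∂P m) * b‖ ≤ Cu * δ := fun m =>
    norm_integral_mul_sub_integral_mul_le (P m) hu.aestronglyMeasurable hI.aestronglyMeasurable
      hCu hδ
  exact le_of_tendsto (hlim.sub (ha.mul_const b)).norm (Eventually.of_forall hbound)

end Convolution

namespace IsChar

variable {G : Type*} [AddCommGroup G] [UniformSpace G] {χ : G → ℂ}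

theorem norm_conj_mul (hχ : IsChar χ) (f : G → ℂ) (s : G) : ‖conj (χ s) * f s‖ = ‖f s‖ := by
  rw [norm_mul, RCLike.norm_conj, hχ.2.1, one_mul]

theorem conj_mul_mul_sub (hχ : IsChar χ) (f g : G → ℂ) (s t : G) :
    conj (χ t) * (f s * g (t - s)) = conj (χ s) * f s * (conj (χ (t - s)) * g (t - s)) := by
  rw [← add_sub_cancel s t, hχ.2.2, map_mul, add_sub_cancel_left]
  ring

end IsChar

/-- if `f ⊛_A g` exists, `c_χ^A(f)` exists and `c_χ(g)` exists uniformly,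
then `c_χ(f ⊛_A g)` exists uniformly and equals `c_χ^A(f) · c_χ(g)`. -/
theorem stmt5 (μ : Measure G) [μ.IsAddHaarMeasure] (A : ℕ → Set G)
    (hA : IsVanHove μ A) (f g χ : G → ℂ) (hf : IsCu f) (hg : IsCu g) (hχ : IsChar χ)
    (F : G → ℂ) (hF : EberleinTendsto μ A f g F)
    (a : ℂ) (ha : FBTendsto μ A χ f a)
    (b : ℂ) (hb : FBUniform μ A χ g b) :
    FBUniform μ A χ F (a * b) := by
  obtain ⟨hAc, hApos, -⟩ := hA
  obtain ⟨hfu, Cf, hCf⟩ := hf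
  obtain ⟨hgu, Cg, hCg⟩ := hg
  have hP : ∀ m, IsProbabilityMeasure μ[|A m] := fun m =>
    cond_isProbabilityMeasure_of_finite (hApos m).ne' (hAc m).measure_lt_top.ne
  simp only [FBUniform, FBTendsto, EberleinTendsto, ← integral_cond_eq,
    inv_smul_setIntegral_vadd_eq_integral_cond] at ha hb hF ⊢
  refine hb.of_norm_sub_le_mul fun n δ hδ x =>
    norm_integral_sub_mul_le_of_tendsto (P := fun m => μ[|A m])
      (u := fun s => conj (χ s) * f s) (v := fun s => conj (χ s) * g s)
      ((Complex.continuous_conj.comp hχ.1).mul hfu.continuous)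
      ((Complex.continuous_conj.comp hχ.1).mul hgu.continuous)
      (fun s => (hχ.norm_conj_mul f s).trans_le (hCf s))
      (fun s => (hχ.norm_conj_mul g s).trans_le (hCg s)) (fun t => ?_) ha fun s => ?_
  · simpa only [← integral_const_mul, hχ.conj_mul_mul_sub] using (hF t).const_mul (conj (χ t))
  · simpa only [integral_cond_vadd, add_sub_right_comm] using hδ (x - s)
end
end

section
/- Let f, g ∈ Cu(G), let χ be a character of G and let A be a van Hove sequence such that the Eberlein convolution f ⊛_A g exists and the Fourier–Bohr coefficient c_χ(g) exists uniformly with respect to A. Then c_χ(f ⊛_A g) exists uniformly with respect to A, and: (a) if c_χ(g) = 0 then c_χ(f ⊛_A g) = 0; (b) if c_χ(g) ≠ 0 then the Fourier–Bohr coefficient c_χ^A(f) exists and c_χ(f ⊛_A g) = c_χ^A(f) · c_χ(g). -/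
/-!
Average `χ̄ · (f ⊛_{A_m} g)` over `x + A_n` and exchange the two averages: since `χ` is a
character, the result is the `A_m`-average of `s ↦ χ̄(s) f(s) B_n(x - s)`, where `B_n(y)` is the
average of `χ̄ g` over `y + A_n`. Uniformly in `y`, `B_n(y)` is close to `c_χ(g)` for large `n`,
so the double average is close to `c_χ^{A_m}(f) c_χ(g)` uniformly in `m` and `x`. Letting
`m → ∞` first (bounded convergence) turns the double average into the average of `χ̄ (f ⊛_A g)`
over `x + A_n`; uniformity in `m` makes `c_χ^{A_m}(f) c_χ(g)` a Cauchy sequence whose limit is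
the uniform limit of these averages.
-/

open MeasureTheory Filter Topology Pointwise ComplexConjugate
open scoped BigOperators

open ProbabilityTheory

section Averages

variable {Ω E : Type*} [MeasurableSpace Ω] [NormedAddCommGroup E] [NormedSpace ℝ E]

instance ProbabilityTheory.isFiniteMeasure_cond (μ : Measure Ω) (s : Set Ω) :
    IsFiniteMeasure μ[|s] :=
  ⟨by
    rw [ProbabilityTheory.cond, Measure.smul_apply, Measure.restrict_apply_univ, smul_eq_mul]
    exact (ENNReal.inv_mul_le_one _).trans_lt ENNReal.one_lt_top⟩

theorem inv_smul_setIntegral_eq_integral_cond (μ : Measure Ω) (s : Set Ω) (h : Ω → E) :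
    (μ s).toReal⁻¹ • ∫ x in s, h x ∂μ = ∫ x, h x ∂μ[|s] := by
  rw [ProbabilityTheory.cond, integral_smul_measure, ENNReal.toReal_inv]

theorem norm_integral_le_of_forall_norm_le {ν : Measure Ω} [IsProbabilityMeasure ν] {h : Ω → E}
    {C : ℝ} (hC : ∀ x, ‖h x‖ ≤ C) : ‖∫ x, h x ∂ν‖ ≤ C := by
  simpa using norm_integral_le_of_norm_le_const (μ := ν) (.of_forall hC)

theorem norm_integral_mul_sub_integral_mul_le_s6 {𝕜 : Type*} [RCLike 𝕜] {ν : Measure Ω}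
    [IsProbabilityMeasure ν] {φ ψ : Ω → 𝕜} {b : 𝕜} {C ε : ℝ} (hφ : AEStronglyMeasurable φ ν)
    (hψ : AEStronglyMeasurable ψ ν) (hφC : ∀ x, ‖φ x‖ ≤ C) (hψb : ∀ x, ‖ψ x - b‖ ≤ ε) :
    ‖∫ x, φ x * ψ x ∂ν - (∫ x, φ x ∂ν) * b‖ ≤ C * ε := by
  have hψ_int : Integrable ψ ν :=
    .of_bound hψ (‖b‖ + ε) (.of_forall fun x => by
      linarith [norm_le_norm_add_norm_sub' (ψ x) b, hψb x])
  rw [← integral_mul_const, ← integral_sub (hψ_int.bdd_mul hφ (.of_forall hφC))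
    ((Integrable.of_bound hφ C (.of_forall hφC)).mul_const b)]
  simp_rw [← mul_sub]
  refine norm_integral_le_of_forall_norm_le fun x => ?_
  rw [norm_mul]
  exact mul_le_mul (hφC x) (hψb x) (norm_nonneg _) ((norm_nonneg _).trans (hφC x))

end Averages

theorem integral_cond_vadd_s6 {G E : Type*} [AddGroup G] [MeasurableSpace G] [MeasurableAdd G]
    [NormedAddCommGroup E] [NormedSpace ℝ E] (μ : Measure G) [μ.IsAddLeftInvariant] (x : G)
    (S : Set G) (h : G → E) : ∫ t, h t ∂μ[|x +ᵥ S] = ∫ u, h (x + u) ∂μ[|S] := by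
  rw [← inv_smul_setIntegral_eq_integral_cond, ← inv_smul_setIntegral_eq_integral_cond,
    measure_vadd, ← Set.image_vadd]
  exact congrArg _
    ((measurePreserving_add_left μ x).setIntegral_image_emb (measurableEmbedding_addLeft x) h S)

section UniformLimits

variable {α β γ δ ι : Type*} [PseudoMetricSpace β]

theorem TendstoUniformly.of_forall_dist_le_mul [PseudoMetricSpace γ] {p : Filter ι} {B : ι → δ → γ}
    {b : γ} {F : ι → α → β} {f : α → β} {C : ℝ} (hB : TendstoUniformly B (fun _ => b) p)
    (hF : ∀ i ε, (∀ y, dist (B i y) b ≤ ε) → ∀ z, dist (F i z) (f z) ≤ C * ε) :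
    TendstoUniformly F f p := by
  rw [Metric.tendstoUniformly_iff] at hB ⊢
  intro ε hε
  have hC : 0 < |C| + 1 := by positivity
  filter_upwards [hB (ε / (|C| + 1)) (by positivity)] with i hi z
  calc dist (f z) (F i z) ≤ C * (ε / (|C| + 1)) := by
        rw [dist_comm]; exact hF i _ (fun y => by rw [dist_comm]; exact (hi y).le) z
    _ ≤ |C| * (ε / (|C| + 1)) := by gcongr; exact le_abs_self C
    _ < ε := by rw [mul_div_assoc', div_lt_iff₀ hC]; linarith

theorem TendstoUniformly.cauchySeq {F : ℕ → ℕ → β} {u : ℕ → β}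
    (hFu : TendstoUniformly F u atTop) (hF : ∀ n, CauchySeq (F n)) : CauchySeq u := by
  rw [Metric.cauchySeq_iff']
  intro ε hε
  obtain ⟨n, hn⟩ := (Metric.tendstoUniformly_iff.1 hFu (ε / 3) (by positivity)).exists
  obtain ⟨N, hN⟩ := Metric.cauchySeq_iff'.1 (hF n) (ε / 3) (by positivity)
  refine ⟨N, fun m hm => ?_⟩
  calc dist (u m) (u N) ≤ dist (u m) (F n m) + dist (F n m) (F n N) + dist (F n N) (u N) :=
        dist_triangle4 _ _ _ _
    _ < ε / 3 + ε / 3 + ε / 3 := by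
        gcongr
        · exact hn m
        · exact hN m hm
        · rw [dist_comm]; exact hn N
    _ = ε := by ring

theorem TendstoUniformly.tendstoUniformly_of_tendsto {F : ℕ → ℕ → α → β} {H : ℕ → α → β}
    {u : ℕ → β} {L : β} (hFu : TendstoUniformly (fun n (p : ℕ × α) => F n p.1 p.2)
      (fun p => u p.1) atTop)
    (hFH : ∀ n x, Tendsto (fun m => F n m x) atTop (𝓝 (H n x))) (hu : Tendsto u atTop (𝓝 L)) :
    TendstoUniformly H (fun _ => L) atTop := by
  rw [Metric.tendstoUniformly_iff] at hFu ⊢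
  intro ε hε
  filter_upwards [hFu (ε / 2) (half_pos hε)] with n hn x
  have : dist L (H n x) ≤ ε / 2 :=
    le_of_tendsto (hu.dist (hFH n x)) (.of_forall fun m => (hn (m, x)).le)
  linarith

theorem TendstoUniformly.exists_tendsto_and_tendstoUniformly [Nonempty α] [CompleteSpace β]
    {F : ℕ → ℕ → α → β} {H : ℕ → α → β} {u : ℕ → β}
    (hFu : TendstoUniformly (fun n (p : ℕ × α) => F n p.1 p.2) (fun p => u p.1) atTop)
    (hFH : ∀ n x, Tendsto (fun m => F n m x) atTop (𝓝 (H n x))) :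
    ∃ L, Tendsto u atTop (𝓝 L) ∧ TendstoUniformly H (fun _ => L) atTop := by
  obtain ⟨x⟩ := ‹Nonempty α›
  obtain ⟨L, hL⟩ := cauchySeq_tendsto_of_complete <|
    (hFu.comp fun m => (m, x)).cauchySeq fun n => (hFH n x).cauchySeq
  exact ⟨L, hL, hFu.tendstoUniformly_of_tendsto hFH hL⟩

end UniformLimits

section

variable {G : Type*} [MeasurableSpace G] {μ : Measure G} {A : ℕ → Set G} {χ f g : G → ℂ}

noncomputable def fbAvg (μ : Measure G) (S : Set G) (χ h : G → ℂ) : ℂ :=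
  ∫ t, conj (χ t) * h t ∂μ[|S]

theorem fbTendsto_iff {c : ℂ} :
    FBTendsto μ A χ f c ↔ Tendsto (fun n => fbAvg μ (A n) χ f) atTop (𝓝 c) := by
  simp only [FBTendsto, fbAvg, inv_smul_setIntegral_eq_integral_cond]

variable [AddCommGroup G]

noncomputable def convAvg (μ : Measure G) (T : Set G) (f g : G → ℂ) (t : G) : ℂ :=
  ∫ s, f s * g (t - s) ∂μ[|T]

theorem eberleinTendsto_iff {F : G → ℂ} :
    EberleinTendsto μ A f g F ↔
      ∀ t, Tendsto (fun m => convAvg μ (A m) f g t) atTop (𝓝 (F t)) := by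
  simp only [EberleinTendsto, convAvg, inv_smul_setIntegral_eq_integral_cond]

theorem fbUniform_iff [MeasurableAdd G] [μ.IsAddLeftInvariant] {c : ℂ} :
    FBUniform μ A χ f c ↔
      TendstoUniformly (fun n (x : G) => fbAvg μ (x +ᵥ A n) χ f) (fun _ => c) atTop := by
  simp only [FBUniform, fbAvg, ← inv_smul_setIntegral_eq_integral_cond, measure_vadd]

variable [UniformSpace G] [IsTopologicalAddGroup G] [SecondCountableTopology G] [BorelSpace G]

theorem fbAvg_vadd_convAvg [μ.IsAddLeftInvariant] (hχ : IsChar χ) (hf : Continuous f)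
    (hf_bdd : ∃ C, ∀ x, ‖f x‖ ≤ C) (hg : Continuous g) (hg_bdd : ∃ C, ∀ x, ‖g x‖ ≤ C)
    (S T : Set G) (x : G) :
    fbAvg μ (x +ᵥ S) χ (convAvg μ T f g) =
      ∫ s, conj (χ s) * f s * fbAvg μ ((x - s) +ᵥ S) χ g ∂μ[|T] := by
  obtain ⟨Cf, hCf⟩ := hf_bdd
  obtain ⟨Cg, hCg⟩ := hg_bdd
  have hk : Integrable (Function.uncurry fun t s => conj (χ t) * (f s * g (t - s)))
      ((μ[|x +ᵥ S]).prod μ[|T]) := by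
    refine .of_bound (Continuous.aestronglyMeasurable ?_) (Cf * Cg) (.of_forall fun p => ?_)
    · have := hχ.1
      fun_prop
    · simp only [Function.uncurry, norm_mul, RCLike.norm_conj, hχ.2.1, one_mul]
      exact mul_le_mul (hCf _) (hCg _) (norm_nonneg _) ((norm_nonneg _).trans (hCf p.2))
  have h_inner : ∀ s, ∫ t, conj (χ t) * (f s * g (t - s)) ∂μ[|x +ᵥ S] =
      conj (χ s) * f s * fbAvg μ ((x - s) +ᵥ S) χ g := by
    intro s
    rw [fbAvg, integral_cond_vadd_s6, integral_cond_vadd_s6, ← integral_const_mul]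
    congr 1 with u
    rw [show x + u = s + (x - s + u) by abel, hχ.2.2, map_mul, add_sub_cancel_left]
    ring
  simp only [fbAvg, convAvg, ← integral_const_mul (conj (χ _))]
  rw [integral_integral_swap hk]
  simp only [h_inner, fbAvg]

theorem tendsto_fbAvg_convAvg [∀ n, IsProbabilityMeasure μ[|A n]] (hχ : IsChar χ)
    (hf : Continuous f) (hf_bdd : ∃ C, ∀ x, ‖f x‖ ≤ C) (hg : Continuous g)
    (hg_bdd : ∃ C, ∀ x, ‖g x‖ ≤ C) {F : G → ℂ}
    (hF : ∀ t, Tendsto (fun m => convAvg μ (A m) f g t) atTop (𝓝 (F t))) (S : Set G) :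
    Tendsto (fun m => fbAvg μ S χ (convAvg μ (A m) f g)) atTop (𝓝 (fbAvg μ S χ F)) := by
  obtain ⟨Cf, hCf⟩ := hf_bdd
  obtain ⟨Cg, hCg⟩ := hg_bdd
  refine tendsto_integral_filter_of_norm_le_const (.of_forall fun m => ?_)
    ⟨Cf * Cg, .of_forall fun m => .of_forall fun t => ?_⟩ (.of_forall fun t => (hF t).const_mul _)
  · have hk : Continuous fun p : G × G => f p.2 * g (p.1 - p.2) := by fun_prop
    exact ((continuous_star.comp hχ.1).stronglyMeasurable.mul
      hk.stronglyMeasurable.integral_prod_right').aestronglyMeasurable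
  · rw [norm_mul, RCLike.norm_conj, hχ.2.1, one_mul]
    refine norm_integral_le_of_forall_norm_le fun s => ?_
    rw [norm_mul]
    exact mul_le_mul (hCf _) (hCg _) (norm_nonneg _) ((norm_nonneg _).trans (hCf s))

theorem tendstoUniformly_fbAvg_convAvg [μ.IsAddLeftInvariant] [∀ n, IsProbabilityMeasure μ[|A n]]
    (hχ : IsChar χ) (hf : Continuous f) (hf_bdd : ∃ C, ∀ x, ‖f x‖ ≤ C) (hg : Continuous g)
    (hg_bdd : ∃ C, ∀ x, ‖g x‖ ≤ C) {b : ℂ}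
    (hb : TendstoUniformly (fun n (x : G) => fbAvg μ (x +ᵥ A n) χ g) (fun _ => b) atTop) :
    TendstoUniformly (fun n (p : ℕ × G) => fbAvg μ (p.2 +ᵥ A n) χ (convAvg μ (A p.1) f g))
      (fun p => fbAvg μ (A p.1) χ f * b) atTop := by
  obtain ⟨Cf, hCf⟩ := hf_bdd
  have hB (n : ℕ) : StronglyMeasurable fun y : G => fbAvg μ (y +ᵥ A n) χ g := by
    have hk : Continuous fun p : G × G => conj (χ (p.1 + p.2)) * g (p.1 + p.2) := by
      have := hχ.1
      fun_prop
    simp only [fbAvg, integral_cond_vadd_s6 μ _ (A n)]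
    exact hk.stronglyMeasurable.integral_prod_right'
  refine hb.of_forall_dist_le_mul (b := b) (C := Cf) fun n ε hε ⟨m, x⟩ => ?_
  rw [dist_eq_norm, fbAvg_vadd_convAvg hχ hf ⟨Cf, hCf⟩ hg hg_bdd]
  refine norm_integral_mul_sub_integral_mul_le_s6
    ((continuous_star.comp hχ.1).mul hf).aestronglyMeasurable
    ((hB n).comp_measurable (measurable_const.sub measurable_id)).aestronglyMeasurable
    (fun s => ?_) (fun s => ?_)
  · rw [norm_mul, RCLike.norm_conj, hχ.2.1, one_mul]
    exact hCf s
  · rw [← dist_eq_norm]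
    exact hε (x - s)

end

variable {G : Type*} [AddCommGroup G] [UniformSpace G] [IsUniformAddGroup G]
  [LocallyCompactSpace G] [SecondCountableTopology G]
  [MeasurableSpace G] [BorelSpace G]

/-- Fourier–Bohr coefficients of `f ⊛_A g` when `c_χ(g)` exists uniformly. -/
theorem stmt6 (μ : Measure G) [μ.IsAddHaarMeasure] (A : ℕ → Set G)
    (hA : IsVanHove μ A) (f g χ : G → ℂ) (hf : IsCu f) (hg : IsCu g) (hχ : IsChar χ)
    (F : G → ℂ) (hF : EberleinTendsto μ A f g F)
    (b : ℂ) (hb : FBUniform μ A χ g b) :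
    (∃ d : ℂ, FBUniform μ A χ F d) ∧
    (b = 0 → FBUniform μ A χ F 0) ∧
    (b ≠ 0 → ∃ a : ℂ, FBTendsto μ A χ f a ∧ FBUniform μ A χ F (a * b)) := by
  obtain ⟨hA_cpt, hA_pos, -⟩ := hA
  have (n : ℕ) : IsProbabilityMeasure μ[|A n] :=
    cond_isProbabilityMeasure_of_finite (hA_pos n).ne' (hA_cpt n).measure_lt_top.ne
  rw [fbUniform_iff] at hb
  simp only [fbUniform_iff, fbTendsto_iff]
  obtain ⟨L, hcL, hHL⟩ :=
    (tendstoUniformly_fbAvg_convAvg hχ hf.1.continuous hf.2 hg.1.continuous hg.2 hb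
      ).exists_tendsto_and_tendstoUniformly (u := fun m => fbAvg μ (A m) χ f * b) fun n x =>
        tendsto_fbAvg_convAvg hχ hf.1.continuous hf.2 hg.1.continuous hg.2
          (eberleinTendsto_iff.1 hF) (x +ᵥ A n)
  refine ⟨⟨L, hHL⟩, fun hb0 => ?_, fun hb0 => ⟨L / b, ?_, ?_⟩⟩
  · subst hb0
    simp only [mul_zero] at hcL
    rwa [tendsto_const_nhds_iff.1 hcL]
  · simpa [hb0] using hcL.div_const b
  · rwa [div_mul_cancel₀ L hb0]
end

section
/- (Consistent phase property for functions.) Let f ∈ Cu(G), let χ be a character of G and let A be a van Hove sequence such that the Eberlein convolution f ⊛_A f̃ (the autocorrelation of f along A) exists and the Fourier–Bohr coefficient c_χ(f) exists uniformly with respect to A. Then the Fourier–Bohr coefficient c_χ(f ⊛_A f̃) exists uniformly with respect to A and c_χ(f ⊛_A f̃) = |c_χ(f)|². -/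
open MeasureTheory Filter Topology Pointwise ComplexConjugate
open scoped BigOperators

noncomputable section

variable {G : Type*} [AddCommGroup G] [UniformSpace G] [IsUniformAddGroup G]
  [LocallyCompactSpace G] [SecondCountableTopology G]
  [MeasurableSpace G] [BorelSpace G]

/-!
Write `h = conj χ * f`. The hypothesis on `f` says that the averages `M n y = ⨍_{y + A n} h`
tend to `a` uniformly in `y`, and multiplying by `conj χ` turns the autocorrelation `γ` of `f` into
the autocorrelation `Γ = conj χ * γ` of `h`. By the van Hove property, `Γ t` is also the limit of
`g m t = ⨍_{u ∈ A m} h (t + u) * conj (h u)`. Averaging `g m` over `x + A n` and exchanging the two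
averages gives `⨍_{u ∈ A m} M n (u + x) * conj (h u)`, which is within `‖M n - a‖_∞ ‖h‖_∞` of
`a * conj (M m 0) → |a|²`. Letting `m → ∞` (dominated convergence) bounds
`‖⨍_{x + A n} Γ - |a|²‖` by `‖M n - a‖_∞ ‖h‖_∞` for every `x`.
-/

open ProbabilityTheory
open scoped ENNReal

section Average

variable {α E : Type*} [MeasurableSpace α] [NormedAddCommGroup E] [NormedSpace ℝ E]
  {μ : Measure α} {s t : Set α}

lemma setAverage_eq_integral_cond (f : α → E) :
    ⨍ x in s, f x ∂μ = ∫ x, f x ∂μ[|s] := by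
  rw [setAverage_eq']
  rfl

lemma norm_setAverage_le [Nonempty α] {f : α → E} {C : ℝ} (hf : ∀ x, ‖f x‖ ≤ C) :
    ‖⨍ x in s, f x ∂μ‖ ≤ C := by
  have hC : 0 ≤ C := (norm_nonneg _).trans (hf (Classical.arbitrary α))
  rw [setAverage_eq_integral_cond]
  calc _ ≤ C * μ[|s].real Set.univ := norm_integral_le_of_norm_le_const (.of_forall hf)
    _ ≤ C := mul_le_of_le_one_right hC measureReal_le_one

lemma measureReal_toMeasurable_sdiff_le (hs : μ s ≠ ∞) :
    μ.real (toMeasurable μ s \ toMeasurable μ t) ≤ μ.real (s \ t) := by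
  rw [Set.sdiff_eq, measureReal_def,
    Measure.measure_toMeasurable_inter (measurableSet_toMeasurable μ t).compl hs,
    ← measureReal_def]
  exact measureReal_mono (Set.inter_subset_inter_right _ (Set.compl_subset_compl.2
    (subset_toMeasurable μ t))) (measure_ne_top_of_subset Set.sdiff_subset hs)

lemma norm_setIntegral_sub_setIntegral_le_s9 [Nonempty α] {φ : α → E} {C : ℝ}
    (hφ : AEStronglyMeasurable φ μ) (hφC : ∀ x, ‖φ x‖ ≤ C) (hs : μ s ≠ ∞) (ht : μ t ≠ ∞) :
    ‖∫ x in s, φ x ∂μ - ∫ x in t, φ x ∂μ‖ ≤ C * (μ.real (s \ t) + μ.real (t \ s)) := by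
  have hC : 0 ≤ C := (norm_nonneg _).trans (hφC (Classical.arbitrary α))
  have hint {u : Set α} (hu : μ u ≠ ∞) : IntegrableOn φ (toMeasurable μ u) μ :=
    have : IsFiniteMeasure (μ.restrict (toMeasurable μ u)) :=
      isFiniteMeasure_restrict.2 (by rwa [measure_toMeasurable])
    Integrable.of_bound hφ.restrict C (.of_forall hφC)
  have hbound {u v : Set α} (hu : μ u ≠ ∞) :
      ‖∫ x in toMeasurable μ u \ toMeasurable μ v, φ x ∂μ‖ ≤ C * μ.real (u \ v) :=
    (norm_setIntegral_le_of_norm_le_const (measure_lt_top_of_subset Set.sdiff_subset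
      (by rwa [measure_toMeasurable])) fun x _ => hφC x).trans
      (mul_le_mul_of_nonneg_left (measureReal_toMeasurable_sdiff_le hu) hC)
  -- `s` and `t` need not be measurable (compact sets of a non-Hausdorff group need not be),
  -- so we integrate over their measurable hulls instead.
  rw [← Measure.restrict_toMeasurable hs, ← Measure.restrict_toMeasurable ht,
    ← integral_inter_add_sdiff (measurableSet_toMeasurable μ t) (hint hs),
    ← integral_inter_add_sdiff (measurableSet_toMeasurable μ s) (hint ht), Set.inter_comm,
    add_sub_add_left_eq_sub, mul_add]
  exact (norm_sub_le _ _).trans (add_le_add (hbound hs) (hbound ht))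

lemma norm_mul_conj_le {z w : ℂ} {C D : ℝ} (hz : ‖z‖ ≤ C) (hw : ‖w‖ ≤ D) :
    ‖z * conj w‖ ≤ C * D := by
  rw [norm_mul, RCLike.norm_conj]
  exact mul_le_mul hz hw (norm_nonneg _) ((norm_nonneg _).trans hz)

lemma norm_setAverage_mul_conj_sub_le [Nonempty α] {F g : α → ℂ} {a : ℂ} {ε C : ℝ}
    (hF : AEStronglyMeasurable F μ) (hg : AEStronglyMeasurable g μ)
    (hFa : ∀ x, ‖F x - a‖ ≤ ε) (hgC : ∀ x, ‖g x‖ ≤ C) :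
    ‖⨍ x in s, F x * conj (g x) ∂μ - a * conj (⨍ x in s, g x ∂μ)‖ ≤ ε * C := by
  have hbound : ∀ x, ‖(F x - a) * conj (g x)‖ ≤ ε * C := fun x =>
    norm_mul_conj_le (hFa x) (hgC x)
  have hconj_meas : AEStronglyMeasurable (fun x => conj (g x)) μ[|s] :=
    (hg.mono_ac cond_absolutelyContinuous).star
  have hFa_meas : AEStronglyMeasurable (fun x => F x - a) μ[|s] :=
    (hF.mono_ac cond_absolutelyContinuous).sub aestronglyMeasurable_const
  have hint : Integrable (fun x => (F x - a) * conj (g x)) μ[|s] :=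
    .of_bound (hFa_meas.mul hconj_meas) _ (.of_forall hbound)
  have hint' : Integrable (fun x => a * conj (g x)) μ[|s] :=
    (Integrable.of_bound hconj_meas C
      (.of_forall fun x => by rw [RCLike.norm_conj]; exact hgC x)).const_mul a
  have hsplit : ⨍ x in s, F x * conj (g x) ∂μ =
      ⨍ x in s, (F x - a) * conj (g x) ∂μ + a * conj (⨍ x in s, g x ∂μ) := by
    simp only [setAverage_eq_integral_cond]
    rw [← integral_conj, ← integral_const_mul, ← integral_add hint hint']
    simp only [sub_mul, sub_add_cancel]
  rw [hsplit, add_sub_cancel_right]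
  exact norm_setAverage_le hbound

end Average

lemma eberleinTendsto_iff_s9 {X : Type*} [AddCommGroup X] [MeasurableSpace X] {μ : Measure X}
    {A : ℕ → Set X} {f g F : X → ℂ} :
    EberleinTendsto μ A f g F ↔
      ∀ t, Tendsto (fun n => ⨍ s in A n, f s * g (t - s) ∂μ) atTop (𝓝 (F t)) := by
  simp only [EberleinTendsto, setAverage_eq, measureReal_def]

section Translation

variable {X E : Type*} [AddCommGroup X] [MeasurableSpace X] [MeasurableAdd X]
  [NormedAddCommGroup E] [NormedSpace ℝ E] {μ : Measure X} [μ.IsAddLeftInvariant]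

lemma setIntegral_vadd (f : X → E) (x : X) (s : Set X) :
    ∫ t in x +ᵥ s, f t ∂μ = ∫ t in s, f (x + t) ∂μ :=
  (measurePreserving_add_left μ x).setIntegral_image_emb (measurableEmbedding_addLeft x) f s

lemma setAverage_vadd (f : X → E) (x : X) (s : Set X) :
    ⨍ t in x +ᵥ s, f t ∂μ = ⨍ t in s, f (x + t) ∂μ := by
  rw [setAverage_eq, setAverage_eq, setIntegral_vadd, measureReal_def, measure_vadd,
    ← measureReal_def]

end Translation

lemma amenable_iff_tendstoUniformly_setAverage {X : Type*} [AddCommGroup X] [MeasurableSpace X]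
    {μ : Measure X} [μ.IsAddLeftInvariant] {A : ℕ → Set X} {f : X → ℂ} {c : ℂ} :
    Amenable μ A f c ↔
      TendstoUniformly (fun n (x : X) => ⨍ t in x +ᵥ A n, f t ∂μ) (fun _ => c) atTop := by
  simp only [Amenable, setAverage_eq, measureReal_def, measure_vadd]

section VanHove

variable {X : Type*} [AddCommGroup X] [UniformSpace X]

lemma vadd_sdiff_subset_vhBoundary (v : X) (S : Set X) :
    (v +ᵥ S) \ S ⊆ vhBoundary {v, -v} S := by
  rintro _ ⟨⟨s, hs, rfl⟩, hvs⟩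
  refine Or.inl ⟨subset_closure ?_, hvs⟩
  show v + s ∈ S + {v, -v}
  rw [add_comm v s]
  exact Set.add_mem_add hs (Set.mem_insert v _)

lemma sdiff_vadd_subset_vhBoundary (v : X) (S : Set X) :
    S \ (v +ᵥ S) ⊆ vhBoundary {v, -v} S := by
  rintro y ⟨hy, hvy⟩
  refine Or.inr ⟨⟨y - v, fun h => hvy ⟨y - v, h, by simp⟩, -v, by simp, by simp⟩,
    subset_closure hy⟩

theorem IsVanHove.tendsto_setAverage_vadd_sub {E : Type*} [NormedAddCommGroup E]
    [NormedSpace ℝ E] [MeasurableSpace X] {μ : Measure X}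
    [μ.IsAddLeftInvariant] [IsFiniteMeasureOnCompacts μ] {A : ℕ → Set X} (hA : IsVanHove μ A)
    (v : X) {φ : X → E} {C : ℝ} (hφ : AEStronglyMeasurable φ μ) (hφC : ∀ x, ‖φ x‖ ≤ C) :
    Tendsto (fun n => ⨍ x in v +ᵥ A n, φ x ∂μ - ⨍ x in A n, φ x ∂μ) atTop (𝓝 0) := by
  obtain ⟨hcompact, -, hboundary⟩ := hA
  have hC : 0 ≤ C := (norm_nonneg _).trans (hφC 0)
  set K : Set X := {v, -v}
  have hK := hboundary K (Set.toFinite K).isCompact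
  have hratio : Tendsto (fun n => (μ (vhBoundary K (A n)) / μ (A n)).toReal) atTop (𝓝 0) := by
    simpa only [Function.comp_def, ENNReal.toReal_zero] using
      (ENNReal.tendsto_toReal ENNReal.zero_ne_top).comp hK
  refine squeeze_zero_norm' ?_ (by simpa only [mul_zero] using hratio.const_mul (2 * C))
  filter_upwards [hK.eventually_lt_const zero_lt_one] with n hn
  have hfin : μ (A n) ≠ ∞ := (hcompact n).measure_lt_top.ne
  have hbfin : μ (vhBoundary K (A n)) ≠ ∞ := fun h => by
    simp [h, ENNReal.top_div_of_ne_top hfin] at hn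
  set b := μ.real (vhBoundary K (A n))
  have hdiff : ‖∫ x in v +ᵥ A n, φ x ∂μ - ∫ x in A n, φ x ∂μ‖ ≤ C * (b + b) :=
    (norm_setIntegral_sub_setIntegral_le_s9 hφ hφC (by rwa [measure_vadd]) hfin).trans
      (mul_le_mul_of_nonneg_left (add_le_add
        (measureReal_mono (vadd_sdiff_subset_vhBoundary v _) hbfin)
        (measureReal_mono (sdiff_vadd_subset_vhBoundary v _) hbfin)) hC)
  calc ‖⨍ x in v +ᵥ A n, φ x ∂μ - ⨍ x in A n, φ x ∂μ‖
      = (μ.real (A n))⁻¹ * ‖∫ x in v +ᵥ A n, φ x ∂μ - ∫ x in A n, φ x ∂μ‖ := by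
        rw [setAverage_eq, setAverage_eq, measureReal_def, measure_vadd, ← measureReal_def,
          ← smul_sub, norm_smul, norm_inv, Real.norm_of_nonneg measureReal_nonneg]
    _ ≤ (μ.real (A n))⁻¹ * (C * (b + b)) := by gcongr
    _ = 2 * C * (μ (vhBoundary K (A n)) / μ (A n)).toReal := by
        rw [ENNReal.toReal_div, ← measureReal_def, ← measureReal_def]
        ring

end VanHove

lemma continuous_setAverage_of_continuous {X Y : Type*} [TopologicalSpace X]
    [FirstCountableTopology X] [LocallyCompactSpace X] [TopologicalSpace Y] [MeasurableSpace Y]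
    [OpensMeasurableSpace Y] [SecondCountableTopologyEither Y ℂ] {μ : Measure Y}
    [IsLocallyFiniteMeasure μ] {F : X → Y → ℂ} (hF : Continuous (Function.uncurry F))
    {s : Set Y} (hs : IsCompact s) :
    Continuous fun x => ⨍ y in s, F x y ∂μ := by
  simp only [setAverage_eq]
  exact (continuous_parametric_integral_of_continuous hF hs).const_smul _

section Autocorrelation

variable {X : Type*} [AddCommGroup X] [UniformSpace X] [IsUniformAddGroup X] [MeasurableSpace X]
  [BorelSpace X] {μ : Measure X} [μ.IsAddLeftInvariant] [IsFiniteMeasureOnCompacts μ]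
  {A : ℕ → Set X} {h Γ : X → ℂ} {C : ℝ}

lemma IsVanHove.tendsto_setAverage_translate_mul_conj (hA : IsVanHove μ A) (hh : Continuous h)
    (hC : ∀ x, ‖h x‖ ≤ C) (hΓ : EberleinTendsto μ A h (tilde h) Γ) (t : X) :
    Tendsto (fun m => ⨍ u in A m, h (t + u) * conj (h u) ∂μ) atTop (𝓝 (Γ t)) := by
  have hshift : Tendsto (fun m => ⨍ u in (-t) +ᵥ A m, h (t + u) * conj (h u) ∂μ)
      atTop (𝓝 (Γ t)) := by
    refine (eberleinTendsto_iff_s9.1 hΓ t).congr fun m => ?_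
    simp only [setAverage_vadd, tilde, neg_sub, neg_add_eq_sub, add_sub_cancel]
  simpa using hshift.sub (hA.tendsto_setAverage_vadd_sub (-t)
    ((hh.comp (continuous_const_add t)).mul (continuous_star.comp hh)).aestronglyMeasurable
    fun u => norm_mul_conj_le (hC _) (hC _))

variable [LocallyCompactSpace X] [SecondCountableTopology X]

lemma IsVanHove.tendsto_setAverage_mul_conj_setAverage (hA : IsVanHove μ A) (hh : Continuous h)
    (hC : ∀ x, ‖h x‖ ≤ C) (hΓ : EberleinTendsto μ A h (tilde h) Γ) (n : ℕ) (x : X) :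
    Tendsto (fun m => ⨍ u in A m, (⨍ t in (u + x) +ᵥ A n, h t ∂μ) * conj (h u) ∂μ)
      atTop (𝓝 (⨍ t in x +ᵥ A n, Γ t ∂μ)) := by
  set F : X → X → ℂ := fun t u => h (t + u) * conj (h u)
  have hF : Continuous (Function.uncurry F) :=
    (hh.comp continuous_add).mul (continuous_star.comp (hh.comp continuous_snd))
  have hFC : ∀ t u, ‖F t u‖ ≤ C * C := fun t u => norm_mul_conj_le (hC _) (hC _)
  have hlim : Tendsto (fun m => ∫ t, ⨍ u in A m, F t u ∂μ ∂μ[|x +ᵥ A n])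
      atTop (𝓝 (∫ t, Γ t ∂μ[|x +ᵥ A n])) :=
    tendsto_integral_of_dominated_convergence (fun _ => C * C)
      (fun m => (continuous_setAverage_of_continuous hF (hA.1 m)).aestronglyMeasurable)
      (integrable_const _) (fun m => .of_forall fun t => norm_setAverage_le (hFC t))
      (.of_forall (hA.tendsto_setAverage_translate_mul_conj hh hC hΓ))
  rw [setAverage_eq_integral_cond]
  refine hlim.congr fun m => ?_
  have hint : Integrable (Function.uncurry F) (μ[|x +ᵥ A n].prod μ[|A m]) :=
    .of_bound hF.aestronglyMeasurable (C * C) (.of_forall fun p => hFC p.1 p.2)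
  simp only [setAverage_eq_integral_cond] at hint ⊢
  rw [integral_integral_swap hint]
  refine integral_congr_ae (.of_forall fun u => ?_)
  simp only [F, integral_mul_const, ← setAverage_eq_integral_cond, setAverage_vadd]
  simp only [add_comm u, add_right_comm _ _ u]

theorem Amenable.autocorrelation_norm_sq (hA : IsVanHove μ A) (hh : Continuous h)
    (hC : ∀ x, ‖h x‖ ≤ C) (hΓ : EberleinTendsto μ A h (tilde h) Γ) {a : ℂ}
    (ha : Amenable μ A h a) : Amenable μ A Γ ((‖a‖ : ℂ) ^ 2) := by
  rw [amenable_iff_tendstoUniformly_setAverage] at ha ⊢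
  have hC0 : 0 ≤ C := (norm_nonneg _).trans (hC 0)
  have hmean : Tendsto (fun m => a * conj (⨍ u in A m, h u ∂μ)) atTop (𝓝 ((‖a‖ : ℂ) ^ 2)) := by
    rw [← Complex.mul_conj']
    simpa only [zero_vadd, Function.comp_def] using
      ((Complex.continuous_conj.tendsto a).comp (ha.tendsto_at 0)).const_mul a
  refine Metric.tendstoUniformly_iff.2 fun ε hε => ?_
  set δ := ε / (C + 1)
  have hδ : 0 < δ := by positivity
  filter_upwards [Metric.tendstoUniformly_iff.1 ha δ hδ] with n hn x
  have hclose : ∀ y, ‖⨍ t in y +ᵥ A n, h t ∂μ - a‖ ≤ δ := fun y => by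
    rw [← dist_eq_norm, dist_comm]
    exact (hn y).le
  have hM : Continuous fun y : X => ⨍ t in y +ᵥ A n, h t ∂μ := by
    simp only [setAverage_vadd]
    exact continuous_setAverage_of_continuous (F := fun y t => h (y + t)) (hh.comp continuous_add)
      (hA.1 n)
  have hle : ‖⨍ t in x +ᵥ A n, Γ t ∂μ - (‖a‖ : ℂ) ^ 2‖ ≤ δ * C :=
    le_of_tendsto ((hA.tendsto_setAverage_mul_conj_setAverage hh hC hΓ n x).sub hmean).norm
      (.of_forall fun m => norm_setAverage_mul_conj_sub_le
        (hM.comp (continuous_add_const x)).aestronglyMeasurable hh.aestronglyMeasurable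
        (fun u => hclose _) hC)
  rw [dist_comm, dist_eq_norm]
  calc _ ≤ δ * C := hle
    _ < δ * (C + 1) := by gcongr; linarith
    _ = ε := div_mul_cancel₀ ε (by positivity)

end Autocorrelation

section Character

variable {X : Type*} [AddCommGroup X] [UniformSpace X] {χ : X → ℂ}

lemma IsChar.map_zero (hχ : IsChar χ) : χ 0 = 1 := by
  have hne : χ 0 ≠ 0 := by simp [← norm_ne_zero_iff, hχ.2.1]
  exact mul_left_cancel₀ hne (by rw [← hχ.2.2, add_zero, mul_one])

lemma IsChar.map_neg (hχ : IsChar χ) (x : X) : χ (-x) = conj (χ x) := by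
  calc χ (-x) = conj (χ x) * χ x * χ (-x) := by
        rw [Complex.conj_mul', hχ.2.1, Complex.ofReal_one, one_pow, one_mul]
    _ = conj (χ x) := by rw [mul_assoc, ← hχ.2.2, add_neg_cancel, hχ.map_zero, mul_one]

lemma IsChar.tilde_conj_mul (hχ : IsChar χ) (f : X → ℂ) :
    tilde (fun t => conj (χ t) * f t) = fun t => conj (χ t) * tilde f t := by
  funext t
  simp only [tilde, map_mul, Complex.conj_conj, hχ.map_neg]

lemma IsChar.eberleinTendsto_conj_mul [MeasurableSpace X] {μ : Measure X} {A : ℕ → Set X}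
    {f g F : X → ℂ} (hχ : IsChar χ) (hF : EberleinTendsto μ A f g F) :
    EberleinTendsto μ A (fun t => conj (χ t) * f t) (fun t => conj (χ t) * g t)
      (fun t => conj (χ t) * F t) := by
  rw [eberleinTendsto_iff_s9] at hF ⊢
  refine fun t => ((hF t).const_mul (conj (χ t))).congr fun n => ?_
  have hχt : ∀ s, χ t = χ s * χ (t - s) := fun s => by rw [← hχ.2.2, add_sub_cancel]
  simp only [setAverage_eq_integral_cond, ← integral_const_mul]
  congr with s
  rw [hχt s, map_mul]
  ring

end Character

/-- consistent phase property for functions: if the autocorrelation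
`f ⊛_A f̃` exists and `c_χ(f)` exists uniformly, then `c_χ(f ⊛_A f̃) = |c_χ(f)|²`,
the Fourier–Bohr coefficient existing uniformly. -/
theorem stmt9 (μ : Measure G) [μ.IsAddHaarMeasure] (A : ℕ → Set G)
    (hA : IsVanHove μ A) (f χ : G → ℂ) (hf : IsCu f) (hχ : IsChar χ)
    (γ : G → ℂ) (hγ : EberleinTendsto μ A f (tilde f) γ)
    (a : ℂ) (ha : FBUniform μ A χ f a) :
    FBUniform μ A χ γ ((‖a‖ : ℂ) ^ 2) := by
  obtain ⟨hf_cont, C, hfC⟩ := hf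
  have hC : ∀ t, ‖conj (χ t) * f t‖ ≤ C := fun t => by
    rw [norm_mul, RCLike.norm_conj, hχ.2.1, one_mul]
    exact hfC t
  have hauto := hχ.eberleinTendsto_conj_mul hγ
  rw [← hχ.tilde_conj_mul] at hauto
  exact Amenable.autocorrelation_norm_sq hA
    ((continuous_star.comp hχ.1).mul hf_cont.continuous) hC hauto ha
end
end
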